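/- arXiv:1403.7732 — 2 statements merged into one kernel-verified Lean document; each statement's English description precedes it below -/
import Mathlib

section
/- Let X₁, X₂ be complex Banach spaces, X := X₁ × X₂, and let 𝒜 = [[A, B],[C, D]] be a block operator matrix on X. Suppose D is closed with nonempty resolvent set ρ(D) and D(D) ⊆ D(B). Then for every λ ∈ ρ(D), one has the Frobenius–Schur factorization 𝒜 − λ = [[I, B(D−λ)⁻¹],[0, I]] · [[S₁(λ), 0],[0, D−λ]] · [[I, 0],[(D−λ)⁻¹C, I]] as an equality of (unbounded) operators on X, including domains, where S₁(λ) := A − λ − B(D−λ)⁻¹C is the first Schur complement with domain D(S₁(λ)) = D(A) ∩ D(C), and each factor denotes the operator induced by the indicated block operator matrix. -/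
open LinearPMap
open scoped LinearPMap

namespace BlockOp

variable {E F G X₁ X₂ Y₁ Y₂ : Type*}
  [AddCommGroup E] [Module ℂ E] [AddCommGroup F] [Module ℂ F] [AddCommGroup G] [Module ℂ G]
  [AddCommGroup X₁] [Module ℂ X₁] [AddCommGroup X₂] [Module ℂ X₂]
  [AddCommGroup Y₁] [Module ℂ Y₁] [AddCommGroup Y₂] [Module ℂ Y₂]

/-- The operator on `X₁ × X₂` induced by a block operator matrix `[[A, B], [C, D]]`. -/
noncomputable def blockOp (A : X₁ →ₗ.[ℂ] Y₁) (B : X₂ →ₗ.[ℂ] Y₁)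
    (C : X₁ →ₗ.[ℂ] Y₂) (D : X₂ →ₗ.[ℂ] Y₂) : (X₁ × X₂) →ₗ.[ℂ] (Y₁ × Y₂) where
  domain := (A.domain ⊓ C.domain).prod (B.domain ⊓ D.domain)
  toFun := LinearMap.prod
    (A.toFun ∘ₗ Submodule.inclusion inf_le_left ∘ₗ
        (LinearMap.fst ℂ X₁ X₂).restrict
          (p := (A.domain ⊓ C.domain).prod (B.domain ⊓ D.domain))
          (q := A.domain ⊓ C.domain) (fun _ hx => hx.1)
      + B.toFun ∘ₗ Submodule.inclusion inf_le_left ∘ₗ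
        (LinearMap.snd ℂ X₁ X₂).restrict
          (p := (A.domain ⊓ C.domain).prod (B.domain ⊓ D.domain))
          (q := B.domain ⊓ D.domain) (fun _ hx => hx.2))
    (C.toFun ∘ₗ Submodule.inclusion inf_le_right ∘ₗ
        (LinearMap.fst ℂ X₁ X₂).restrict
          (p := (A.domain ⊓ C.domain).prod (B.domain ⊓ D.domain))
          (q := A.domain ⊓ C.domain) (fun _ hx => hx.1)
      + D.toFun ∘ₗ Submodule.inclusion inf_le_right ∘ₗ
        (LinearMap.snd ℂ X₁ X₂).restrict
          (p := (A.domain ⊓ C.domain).prod (B.domain ⊓ D.domain))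
          (q := B.domain ⊓ D.domain) (fun _ hx => hx.2))

/-- A linear operator on a product space has a matrix representation if it is induced
by some block operator matrix. -/
def HasMatrixRep (T : (X₁ × X₂) →ₗ.[ℂ] (Y₁ × Y₂)) : Prop :=
  ∃ (A : X₁ →ₗ.[ℂ] Y₁) (B : X₂ →ₗ.[ℂ] Y₁) (C : X₁ →ₗ.[ℂ] Y₂) (D : X₂ →ₗ.[ℂ] Y₂),
    T = blockOp A B C D

/-- The composition of two partially defined operators, with its natural domain
`{x ∈ D(B) : B x ∈ D(A)}`. -/
noncomputable def pcomp (A : F →ₗ.[ℂ] G) (B : E →ₗ.[ℂ] F) : E →ₗ.[ℂ] G where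
  domain :=
    { carrier := {x | ∃ hx : x ∈ B.domain, B ⟨x, hx⟩ ∈ A.domain}
      zero_mem' := ⟨B.domain.zero_mem, by
        have : (⟨0, B.domain.zero_mem⟩ : B.domain) = 0 := rfl
        rw [this, LinearPMap.map_zero]; exact A.domain.zero_mem⟩
      add_mem' := by
        rintro a b ⟨ha, ha'⟩ ⟨hb, hb'⟩
        refine ⟨add_mem ha hb, ?_⟩
        have : (⟨a + b, add_mem ha hb⟩ : B.domain) = ⟨a, ha⟩ + ⟨b, hb⟩ := rfl
        rw [this, LinearPMap.map_add]
        exact add_mem ha' hb'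
      smul_mem' := by
        rintro c a ⟨ha, ha'⟩
        refine ⟨Submodule.smul_mem _ c ha, ?_⟩
        have : (⟨c • a, Submodule.smul_mem _ c ha⟩ : B.domain) = c • (⟨a, ha⟩ : B.domain) := rfl
        rw [this, LinearPMap.map_smul]
        exact Submodule.smul_mem _ c ha' }
  toFun := A.toFun ∘ₗ LinearMap.codRestrict A.domain
      (B.toFun ∘ₗ
        { toFun := fun x => (⟨(x : E), x.2.choose⟩ : B.domain)
          map_add' := fun x y => Subtype.ext rfl
          map_smul' := fun c x => Subtype.ext rfl })
      (fun x => x.2.choose_spec)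

end BlockOp

namespace BlockOp

section Transport

variable {E F G E' F' : Type*}
  [AddCommGroup E] [Module ℂ E] [AddCommGroup F] [Module ℂ F] [AddCommGroup G] [Module ℂ G]
  [AddCommGroup E'] [Module ℂ E'] [AddCommGroup F'] [Module ℂ F']

/-- Transport a partially defined linear map along linear equivalences. -/
noncomputable def pmapCongr (e : E ≃ₗ[ℂ] E') (T : E' →ₗ.[ℂ] F') (e' : F' ≃ₗ[ℂ] F) :
    E →ₗ.[ℂ] F where
  domain := T.domain.comap (e : E →ₗ[ℂ] E')
  toFun := (e' : F' →ₗ[ℂ] F) ∘ₗ T.toFun ∘ₗ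
    ((e : E →ₗ[ℂ] E').restrict (p := T.domain.comap (e : E →ₗ[ℂ] E')) (q := T.domain)
      (fun _ hx => hx))

end Transport

section Corners

variable {X₁ X₂ Y₁ Y₂ : Type*}
  [AddCommGroup X₁] [Module ℂ X₁] [AddCommGroup X₂] [Module ℂ X₂]
  [AddCommGroup Y₁] [Module ℂ Y₁] [AddCommGroup Y₂] [Module ℂ Y₂]

/-- The upper-left corner `P₁ 𝒜 J₁` of an operator on a product space, with domain
`{x₁ : (x₁, 0) ∈ D(𝒜)}`. -/
noncomputable def corner₁₁ (T : (X₁ × X₂) →ₗ.[ℂ] (Y₁ × Y₂)) : X₁ →ₗ.[ℂ] Y₁ where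
  domain := T.domain.comap (LinearMap.inl ℂ X₁ X₂)
  toFun := LinearMap.fst ℂ Y₁ Y₂ ∘ₗ T.toFun ∘ₗ
    ((LinearMap.inl ℂ X₁ X₂).restrict (p := T.domain.comap (LinearMap.inl ℂ X₁ X₂))
      (q := T.domain) (fun _ hx => hx))

/-- The lower-left corner `P₂ 𝒜 J₁`. -/
noncomputable def corner₂₁ (T : (X₁ × X₂) →ₗ.[ℂ] (Y₁ × Y₂)) : X₁ →ₗ.[ℂ] Y₂ where
  domain := T.domain.comap (LinearMap.inl ℂ X₁ X₂)
  toFun := LinearMap.snd ℂ Y₁ Y₂ ∘ₗ T.toFun ∘ₗ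
    ((LinearMap.inl ℂ X₁ X₂).restrict (p := T.domain.comap (LinearMap.inl ℂ X₁ X₂))
      (q := T.domain) (fun _ hx => hx))

/-- The upper-right corner `P₁ 𝒜 J₂`. -/
noncomputable def corner₁₂ (T : (X₁ × X₂) →ₗ.[ℂ] (Y₁ × Y₂)) : X₂ →ₗ.[ℂ] Y₁ where
  domain := T.domain.comap (LinearMap.inr ℂ X₁ X₂)
  toFun := LinearMap.fst ℂ Y₁ Y₂ ∘ₗ T.toFun ∘ₗ
    ((LinearMap.inr ℂ X₁ X₂).restrict (p := T.domain.comap (LinearMap.inr ℂ X₁ X₂))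
      (q := T.domain) (fun _ hx => hx))

/-- The lower-right corner `P₂ 𝒜 J₂`. -/
noncomputable def corner₂₂ (T : (X₁ × X₂) →ₗ.[ℂ] (Y₁ × Y₂)) : X₂ →ₗ.[ℂ] Y₂ where
  domain := T.domain.comap (LinearMap.inr ℂ X₁ X₂)
  toFun := LinearMap.snd ℂ Y₁ Y₂ ∘ₗ T.toFun ∘ₗ
    ((LinearMap.inr ℂ X₁ X₂).restrict (p := T.domain.comap (LinearMap.inr ℂ X₁ X₂))
      (q := T.domain) (fun _ hx => hx))

end Corners

section Shift

variable {E : Type*} [AddCommGroup E] [Module ℂ E]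

/-- `T - λ`, i.e. `T - λ·I`, with domain `D(T)`. -/
noncomputable def shift (T : E →ₗ.[ℂ] E) (lam : ℂ) : E →ₗ.[ℂ] E :=
  T - (lam • (LinearMap.id : E →ₗ[ℂ] E)).toPMap ⊤

/-- The identity as a partially defined operator with full domain. -/
noncomputable def idP (E : Type*) [AddCommGroup E] [Module ℂ E] : E →ₗ.[ℂ] E :=
  (LinearMap.id : E →ₗ[ℂ] E).toPMap ⊤

end Shift

section Resolvent

variable {E : Type*} [NormedAddCommGroup E] [NormedSpace ℂ E]

/-- `R` is the (bounded, everywhere defined) inverse of `T - λ`;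
this witnesses that `λ` belongs to the resolvent set of `T`. -/
structure IsResolventAt (T : E →ₗ.[ℂ] E) (lam : ℂ) (R : E →L[ℂ] E) : Prop where
  mem : ∀ y, R y ∈ T.domain
  right_inv : ∀ y, T ⟨R y, mem y⟩ - lam • (R y) = y
  left_inv : ∀ x : T.domain, R (T x - lam • (x : E)) = x

/-- The resolvent set of `T`: those `λ ∈ ℂ` for which `T - λ` is a bijection from `D(T)`
onto the whole space with bounded inverse. -/
def resolventSet (T : E →ₗ.[ℂ] E) : Set ℂ :=
  {lam | ∃ R : E →L[ℂ] E, IsResolventAt T lam R}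

end Resolvent

section RelativeBound

variable {E F G : Type*} [NormedAddCommGroup E] [NormedSpace ℂ E]
  [NormedAddCommGroup F] [NormedSpace ℂ F] [NormedAddCommGroup G] [NormedSpace ℂ G]

/-- `S` is `T`-bounded with constants `a`, `b`:
`D(T) ⊆ D(S)` and `‖S x‖ ≤ a ‖x‖ + b ‖T x‖` on `D(T)`. -/
structure RelBound (S : E →ₗ.[ℂ] G) (T : E →ₗ.[ℂ] F) (a b : ℝ) : Prop where
  dom_le : T.domain ≤ S.domain
  bound : ∀ x : T.domain, ‖S ⟨(x : E), dom_le x.2⟩‖ ≤ a * ‖(x : E)‖ + b * ‖T x‖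

/-- `S` is `T`-bounded with relative bound `< c`. -/
def IsRelBoundedLt (S : E →ₗ.[ℂ] G) (T : E →ₗ.[ℂ] F) (c : ℝ) : Prop :=
  ∃ b, 0 ≤ b ∧ b < c ∧ ∃ a, 0 ≤ a ∧ RelBound S T a b

/-- `S` is `T`-bounded with relative bound `≤ c` (for `c = 0`: relative bound `0`). -/
def IsRelBoundedLe (S : E →ₗ.[ℂ] G) (T : E →ₗ.[ℂ] F) (c : ℝ) : Prop :=
  ∀ b, c < b → ∃ a, 0 ≤ a ∧ RelBound S T a b

end RelativeBound

section HilbertProduct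

variable {H₁ H₂ K₁ K₂ : Type*}
  [NormedAddCommGroup H₁] [InnerProductSpace ℂ H₁]
  [NormedAddCommGroup H₂] [InnerProductSpace ℂ H₂]
  [NormedAddCommGroup K₁] [InnerProductSpace ℂ K₁]
  [NormedAddCommGroup K₂] [InnerProductSpace ℂ K₂]

/-- The operator induced by a block operator matrix on the Hilbert space
`H₁ ×_{ℓ²} H₂`, i.e. `WithLp 2 (H₁ × H₂)`. -/
noncomputable def blockOpL (A : H₁ →ₗ.[ℂ] K₁) (B : H₂ →ₗ.[ℂ] K₁)
    (C : H₁ →ₗ.[ℂ] K₂) (D : H₂ →ₗ.[ℂ] K₂) :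
    WithLp 2 (H₁ × H₂) →ₗ.[ℂ] WithLp 2 (K₁ × K₂) :=
  pmapCongr (WithLp.linearEquiv 2 ℂ (H₁ × H₂)) (blockOp A B C D)
    (WithLp.linearEquiv 2 ℂ (K₁ × K₂)).symm

/-- A linear operator on `H₁ ×_{ℓ²} H₂` has a matrix representation if it is induced by
some block operator matrix. -/
def HasMatrixRepL (T : WithLp 2 (H₁ × H₂) →ₗ.[ℂ] WithLp 2 (K₁ × K₂)) : Prop :=
  ∃ (A : H₁ →ₗ.[ℂ] K₁) (B : H₂ →ₗ.[ℂ] K₁) (C : H₁ →ₗ.[ℂ] K₂) (D : H₂ →ₗ.[ℂ] K₂),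
    T = blockOpL A B C D

end HilbertProduct

section EssSelfAdjoint

variable {E : Type*} [NormedAddCommGroup E] [InnerProductSpace ℂ E] [CompleteSpace E]

/-- An operator is essentially self-adjoint if it is closable and its closure is
self-adjoint. -/
def IsEssentiallySelfAdjoint (T : E →ₗ.[ℂ] E) : Prop :=
  T.IsClosable ∧ IsSelfAdjoint T.closure

end EssSelfAdjoint

end BlockOp

/-!
Let `R = (D - λ)⁻¹` and `w = R C x₁ + x₂`. The lower factor sends `(x₁, x₂)` to `(x₁, w)`, and
`w ∈ D(D)` exactly when `x₂ ∈ D(D)` because `R` maps into `D(D)`; the diagonal factor then gives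
`(S₁(λ) x₁, (D - λ) w)`. Since `R` maps into `D(D) ⊆ D(B)`, the upper factor is everywhere
defined, and `R (D - λ) w = w` turns its output into `(S₁(λ) x₁ + B w, (D - λ) w)`. Expanding
`S₁(λ) x₁ = (A - λ) x₁ - B R C x₁` and `(D - λ) w = C x₁ + (D - λ) x₂` gives `(𝒜 - λ) (x₁, x₂)`;
both sides are defined exactly on `(D(A) ∩ D(C)) × D(D)`.
-/

namespace BlockOp

section Algebra

variable {E F G X₁ X₂ Y₁ Y₂ : Type*}
  [AddCommGroup E] [Module ℂ E] [AddCommGroup F] [Module ℂ F] [AddCommGroup G] [Module ℂ G]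
  [AddCommGroup X₁] [Module ℂ X₁] [AddCommGroup X₂] [Module ℂ X₂]
  [AddCommGroup Y₁] [Module ℂ Y₁] [AddCommGroup Y₂] [Module ℂ Y₂]

theorem apply_congr (f : E →ₗ.[ℂ] F) {x y : E} (hx : x ∈ f.domain) (hy : y ∈ f.domain)
    (h : x = y) : f ⟨x, hx⟩ = f ⟨y, hy⟩ := by
  subst h; rfl

theorem apply_add (f : E →ₗ.[ℂ] F) {x y : E} (hx : x ∈ f.domain) (hy : y ∈ f.domain)
    (hxy : x + y ∈ f.domain) : f ⟨x + y, hxy⟩ = f ⟨x, hx⟩ + f ⟨y, hy⟩ :=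
  f.map_add ⟨x, hx⟩ ⟨y, hy⟩

theorem mem_pcomp_domain {A : F →ₗ.[ℂ] G} {B : E →ₗ.[ℂ] F} {x : E} :
    x ∈ (pcomp A B).domain ↔ ∃ hx : x ∈ B.domain, B ⟨x, hx⟩ ∈ A.domain := Iff.rfl

theorem pcomp_domain_of_domain_eq_top {A : F →ₗ.[ℂ] G} (hA : A.domain = ⊤) (B : E →ₗ.[ℂ] F) :
    (pcomp A B).domain = B.domain := by
  ext x
  simp [mem_pcomp_domain, hA]

theorem mem_shift_domain {T : E →ₗ.[ℂ] E} {lam : ℂ} {x : E} :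
    x ∈ (shift T lam).domain ↔ x ∈ T.domain :=
  ⟨And.left, fun h => ⟨h, trivial⟩⟩

theorem shift_apply (T : E →ₗ.[ℂ] E) (lam : ℂ) {x : E} (hx : x ∈ (shift T lam).domain)
    (hT : x ∈ T.domain) : shift T lam ⟨x, hx⟩ = T ⟨x, hT⟩ - lam • x := rfl

theorem shift_blockOp_domain {A : X₁ →ₗ.[ℂ] X₁} {B : X₂ →ₗ.[ℂ] X₁} {C : X₁ →ₗ.[ℂ] X₂}
    {D : X₂ →ₗ.[ℂ] X₂} (hDB : D.domain ≤ B.domain) (lam : ℂ) :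
    (shift (blockOp A B C D) lam).domain = (A.domain ⊓ C.domain).prod D.domain := by
  ext x
  simp only [mem_shift_domain, blockOp, Submodule.mem_prod, Submodule.mem_inf,
    and_iff_right_of_imp (@hDB x.2)]

theorem shift_blockOp_apply {A : X₁ →ₗ.[ℂ] X₁} {B : X₂ →ₗ.[ℂ] X₁} {C : X₁ →ₗ.[ℂ] X₂}
    {D : X₂ →ₗ.[ℂ] X₂} (lam : ℂ) {x : X₁ × X₂}
    (hx : x ∈ (shift (blockOp A B C D) lam).domain) :
    shift (blockOp A B C D) lam ⟨x, hx⟩ =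
      (A ⟨x.1, hx.1.1.1⟩ + B ⟨x.2, hx.1.2.1⟩ - lam • x.1,
        C ⟨x.1, hx.1.1.2⟩ + D ⟨x.2, hx.1.2.2⟩ - lam • x.2) := rfl

theorem mem_blockOp_diag_domain {S : X₁ →ₗ.[ℂ] Y₁} {T : X₂ →ₗ.[ℂ] Y₂} {x : X₁ × X₂} :
    x ∈ (blockOp S 0 0 T).domain ↔ x.1 ∈ S.domain ∧ x.2 ∈ T.domain :=
  ⟨fun h => ⟨h.1.1, h.2.2⟩, fun h => ⟨⟨h.1, trivial⟩, trivial, h.2⟩⟩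

theorem blockOp_diag_apply (S : X₁ →ₗ.[ℂ] Y₁) (T : X₂ →ₗ.[ℂ] Y₂) {x : X₁ × X₂}
    (hx : x ∈ (blockOp S 0 0 T).domain) (hS : x.1 ∈ S.domain) (hT : x.2 ∈ T.domain) :
    blockOp S 0 0 T ⟨x, hx⟩ = (S ⟨x.1, hS⟩, T ⟨x.2, hT⟩) :=
  Prod.ext (add_zero _) (zero_add _)

noncomputable def schurComplement (A : X₁ →ₗ.[ℂ] X₁) (B : X₂ →ₗ.[ℂ] X₁) (C : X₁ →ₗ.[ℂ] X₂)
    (lam : ℂ) (R : X₂ →ₗ[ℂ] X₂) : X₁ →ₗ.[ℂ] X₁ :=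
  shift A lam - pcomp B (R.compPMap C)

noncomputable def upperFactor (B : X₂ →ₗ.[ℂ] X₁) (R : X₂ →ₗ[ℂ] X₂) :
    (X₁ × X₂) →ₗ.[ℂ] (X₁ × X₂) :=
  blockOp (idP X₁) (pcomp B (R.toPMap ⊤)) 0 (idP X₂)

noncomputable def lowerFactor (C : X₁ →ₗ.[ℂ] X₂) (R : X₂ →ₗ[ℂ] X₂) :
    (X₁ × X₂) →ₗ.[ℂ] (X₁ × X₂) :=
  blockOp (idP X₁) 0 (R.compPMap C) (idP X₂)

noncomputable def frobeniusSchurProduct (A : X₁ →ₗ.[ℂ] X₁) (B : X₂ →ₗ.[ℂ] X₁)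
    (C : X₁ →ₗ.[ℂ] X₂) (D : X₂ →ₗ.[ℂ] X₂) (lam : ℂ) (R : X₂ →ₗ[ℂ] X₂) :
    (X₁ × X₂) →ₗ.[ℂ] (X₁ × X₂) :=
  pcomp (upperFactor B R)
    (pcomp (blockOp (schurComplement A B C lam R) 0 0 (shift D lam)) (lowerFactor C R))

variable {A : X₁ →ₗ.[ℂ] X₁} {B : X₂ →ₗ.[ℂ] X₁} {C : X₁ →ₗ.[ℂ] X₂} {D : X₂ →ₗ.[ℂ] X₂}
  {R : X₂ →ₗ[ℂ] X₂}

theorem schurComplement_domain (hRB : ∀ y, R y ∈ B.domain) (lam : ℂ) :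
    (schurComplement A B C lam R).domain = A.domain ⊓ C.domain := by
  ext x
  exact ⟨fun h => ⟨h.1.1, h.2.1⟩, fun h => ⟨⟨h.1, trivial⟩, h.2, hRB _⟩⟩

theorem schurComplement_apply (hRB : ∀ y, R y ∈ B.domain) (lam : ℂ) {x : X₁}
    (hx : x ∈ (schurComplement A B C lam R).domain) (hA : x ∈ A.domain) (hC : x ∈ C.domain) :
    schurComplement A B C lam R ⟨x, hx⟩ = A ⟨x, hA⟩ - lam • x - B ⟨R (C ⟨x, hC⟩), hRB _⟩ :=
  rfl

theorem upperFactor_domain (hRB : ∀ y, R y ∈ B.domain) : (upperFactor B R).domain = ⊤ :=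
  eq_top_iff.2 fun x _ => ⟨⟨trivial, trivial⟩, ⟨trivial, hRB x.2⟩, trivial⟩

theorem upperFactor_apply (hRB : ∀ y, R y ∈ B.domain) {x : X₁ × X₂}
    (hx : x ∈ (upperFactor B R).domain) :
    upperFactor B R ⟨x, hx⟩ = (x.1 + B ⟨R x.2, hRB x.2⟩, x.2) :=
  Prod.ext rfl (zero_add _)

theorem mem_lowerFactor_domain {x : X₁ × X₂} :
    x ∈ (lowerFactor C R).domain ↔ x.1 ∈ C.domain :=
  ⟨fun h => h.1.2, fun h => ⟨⟨trivial, h⟩, trivial, trivial⟩⟩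

theorem lowerFactor_apply {x : X₁ × X₂} (hx : x ∈ (lowerFactor C R).domain)
    (hC : x.1 ∈ C.domain) : lowerFactor C R ⟨x, hx⟩ = (x.1, R (C ⟨x.1, hC⟩) + x.2) :=
  Prod.ext (add_zero _) rfl

theorem mem_pcomp_blockOp_diag_lowerFactor_domain {S : X₁ →ₗ.[ℂ] X₁} {T : X₂ →ₗ.[ℂ] X₂}
    {x : X₁ × X₂} :
    x ∈ (pcomp (blockOp S 0 0 T) (lowerFactor C R)).domain ↔
      ∃ hC : x.1 ∈ C.domain, x.1 ∈ S.domain ∧ R (C ⟨x.1, hC⟩) + x.2 ∈ T.domain := by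
  rw [mem_pcomp_domain]
  constructor
  · rintro ⟨hL, hM⟩
    have hC := mem_lowerFactor_domain.1 hL
    rw [lowerFactor_apply hL hC, mem_blockOp_diag_domain] at hM
    exact ⟨hC, hM⟩
  · rintro ⟨hC, hST⟩
    have hL : x ∈ (lowerFactor C R).domain := mem_lowerFactor_domain.2 hC
    refine ⟨hL, ?_⟩
    rwa [lowerFactor_apply hL hC, mem_blockOp_diag_domain]

theorem frobeniusSchurProduct_domain (hRD : ∀ y, R y ∈ D.domain) (hDB : D.domain ≤ B.domain)
    (lam : ℂ) :
    (frobeniusSchurProduct A B C D lam R).domain = (A.domain ⊓ C.domain).prod D.domain := by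
  have hRB : ∀ y, R y ∈ B.domain := fun y => hDB (hRD y)
  rw [frobeniusSchurProduct, pcomp_domain_of_domain_eq_top (upperFactor_domain hRB)]
  ext x
  simp only [mem_pcomp_blockOp_diag_lowerFactor_domain, schurComplement_domain hRB,
    mem_shift_domain, Submodule.add_mem_iff_right _ (hRD _), Submodule.mem_prod,
    Submodule.mem_inf, exists_prop]
  tauto

end Algebra

section Resolvent

variable {X₁ X₂ : Type*} [NormedAddCommGroup X₁] [NormedSpace ℂ X₁]
  [NormedAddCommGroup X₂] [NormedSpace ℂ X₂]
  {A : X₁ →ₗ.[ℂ] X₁} {B : X₂ →ₗ.[ℂ] X₁} {C : X₁ →ₗ.[ℂ] X₂} {D : X₂ →ₗ.[ℂ] X₂} {lam : ℂ}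
  {R : X₂ →L[ℂ] X₂}

theorem IsResolventAt.apply_shift (hR : IsResolventAt D lam R) {x : X₂}
    (hx : x ∈ (shift D lam).domain) : (R : X₂ →ₗ[ℂ] X₂) (shift D lam ⟨x, hx⟩) = x :=
  hR.left_inv ⟨x, hx.1⟩

theorem IsResolventAt.shift_apply (hR : IsResolventAt D lam R) (y : X₂)
    (hy : (R : X₂ →ₗ[ℂ] X₂) y ∈ (shift D lam).domain) :
    shift D lam ⟨(R : X₂ →ₗ[ℂ] X₂) y, hy⟩ = y :=
  hR.right_inv y

theorem frobeniusSchurProduct_apply (hR : IsResolventAt D lam R) (hDB : D.domain ≤ B.domain)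
    {x : X₁ × X₂} (hx : x ∈ (frobeniusSchurProduct A B C D lam R).domain)
    (hA : x.1 ∈ A.domain) (hC : x.1 ∈ C.domain) (hD : x.2 ∈ D.domain) :
    frobeniusSchurProduct A B C D lam R ⟨x, hx⟩ =
      (A ⟨x.1, hA⟩ + B ⟨x.2, hDB hD⟩ - lam • x.1, C ⟨x.1, hC⟩ + D ⟨x.2, hD⟩ - lam • x.2) := by
  set Rl : X₂ →ₗ[ℂ] X₂ := (R : X₂ →ₗ[ℂ] X₂)
  have hRD : ∀ y, Rl y ∈ (shift D lam).domain := fun y => mem_shift_domain.2 (hR.mem y)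
  have hRB : ∀ y, Rl y ∈ B.domain := fun y => hDB (hR.mem y)
  obtain ⟨⟨hL, hM⟩, -⟩ := hx
  set w := Rl (C ⟨x.1, hC⟩) + x.2
  have hwD : w ∈ D.domain := add_mem (hR.mem _) hD
  have hw : w ∈ (shift D lam).domain := mem_shift_domain.2 hwD
  have hS : x.1 ∈ (schurComplement A B C lam Rl).domain := by
    rw [schurComplement_domain hRB]; exact ⟨hA, hC⟩
  have hML : blockOp (schurComplement A B C lam Rl) 0 0 (shift D lam) ⟨_, hM⟩ =
      (schurComplement A B C lam Rl ⟨x.1, hS⟩, shift D lam ⟨w, hw⟩) :=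
    (apply_congr _ (y := (x.1, w)) hM (mem_blockOp_diag_domain.2 ⟨hS, hw⟩)
      (lowerFactor_apply hL hC)).trans (blockOp_diag_apply _ _ (x := (x.1, w)) _ hS hw)
  have hU : ∀ p, p ∈ (upperFactor B Rl).domain := fun p => (upperFactor_domain hRB).symm ▸ trivial
  have hDw : shift D lam ⟨w, hw⟩ = C ⟨x.1, hC⟩ + (D ⟨x.2, hD⟩ - lam • x.2) := by
    rw [apply_add _ (hRD _) (mem_shift_domain.2 hD), hR.shift_apply, shift_apply _ _ _ hD]
  calc _ = upperFactor B Rl ⟨_, hU _⟩ := rfl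
    _ = upperFactor B Rl ⟨_, hU _⟩ := apply_congr _ _ _ hML
    _ = (schurComplement A B C lam Rl ⟨x.1, hS⟩ + B ⟨w, hDB hwD⟩, shift D lam ⟨w, hw⟩) := by
      rw [upperFactor_apply hRB, apply_congr B _ (hDB hwD) (hR.apply_shift hw)]
    _ = _ := by
      rw [schurComplement_apply hRB _ _ hA hC, apply_add B (hRB _) (hDB hD), hDw]
      congr 1 <;> abel

end Resolvent

theorem statement2_general {X₁ X₂ : Type*}
    [NormedAddCommGroup X₁] [NormedSpace ℂ X₁]
    [NormedAddCommGroup X₂] [NormedSpace ℂ X₂]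
    (A : X₁ →ₗ.[ℂ] X₁) (B : X₂ →ₗ.[ℂ] X₁) (C : X₁ →ₗ.[ℂ] X₂) (D : X₂ →ₗ.[ℂ] X₂)
    (hDB : D.domain ≤ B.domain)
    (lam : ℂ) (R : X₂ →L[ℂ] X₂) (hR : IsResolventAt D lam R) :
    (shift A lam - pcomp B ((R : X₂ →ₗ[ℂ] X₂).compPMap C)).domain = A.domain ⊓ C.domain ∧
    shift (blockOp A B C D) lam =
      pcomp
        (blockOp (idP X₁) (pcomp B ((R : X₂ →ₗ[ℂ] X₂).toPMap ⊤)) (0 : X₁ →ₗ.[ℂ] X₂) (idP X₂))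
        (pcomp
          (blockOp (shift A lam - pcomp B ((R : X₂ →ₗ[ℂ] X₂).compPMap C)) 0 0 (shift D lam))
          (blockOp (idP X₁) 0 ((R : X₂ →ₗ[ℂ] X₂).compPMap C) (idP X₂))) := by
  refine ⟨schurComplement_domain (fun y => hDB (hR.mem y)) lam, LinearPMap.ext ?_ ?_⟩
  · exact (shift_blockOp_domain hDB lam).trans (frobeniusSchurProduct_domain hR.mem hDB lam).symm
  · intro x hx hy
    obtain ⟨⟨⟨hA, hC⟩, -, hD⟩, -⟩ := hx
    exact (shift_blockOp_apply lam _).trans (frobeniusSchurProduct_apply hR hDB hy hA hC hD).symm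

theorem statement2 {X₁ X₂ : Type*}
    [NormedAddCommGroup X₁] [NormedSpace ℂ X₁] [CompleteSpace X₁]
    [NormedAddCommGroup X₂] [NormedSpace ℂ X₂] [CompleteSpace X₂]
    (A : X₁ →ₗ.[ℂ] X₁) (B : X₂ →ₗ.[ℂ] X₁) (C : X₁ →ₗ.[ℂ] X₂) (D : X₂ →ₗ.[ℂ] X₂)
    (hDclosed : D.IsClosed) (hres : (resolventSet D).Nonempty) (hDB : D.domain ≤ B.domain)
    (lam : ℂ) (R : X₂ →L[ℂ] X₂) (hR : IsResolventAt D lam R) :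
    (shift A lam - pcomp B ((R : X₂ →ₗ[ℂ] X₂).compPMap C)).domain = A.domain ⊓ C.domain ∧
    shift (blockOp A B C D) lam =
      pcomp
        (blockOp (idP X₁) (pcomp B ((R : X₂ →ₗ[ℂ] X₂).toPMap ⊤)) (0 : X₁ →ₗ.[ℂ] X₂) (idP X₂))
        (pcomp
          (blockOp (shift A lam - pcomp B ((R : X₂ →ₗ[ℂ] X₂).compPMap C)) 0 0 (shift D lam))
          (blockOp (idP X₁) 0 ((R : X₂ →ₗ[ℂ] X₂).compPMap C) (idP X₂))) :=
  statement2_general A B C D hDB lam R hR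

end BlockOp
end

section
/- Let H₁, H₂ be complex Hilbert spaces, H := H₁ × H₂, and let 𝒜 = [[A, B],[C, D]] be a block operator matrix on H such that D(A) = D(C) =: D₁ is dense in H₁ and D(B) = D(D) =: D₂ is dense in H₂ (so D(𝒜) = D₁ × D₂ is dense in H). If the induced operator 𝒜 is self-adjoint, then A, B, C, D are closable and 𝒜 equals the operator induced by the block operator matrix of closures [[Ā, B̄],[C̄, D̄]], and moreover 𝒜 equals its formal adjoint 𝒜^×, the operator induced by [[A*, C*],[B*, D*]]. -/
open LinearPMap
open scoped LinearPMap

/-!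
Self-adjointness of `𝒜` makes it symmetric, and testing the symmetry on vectors `(u, 0)` and
`(0, v)` shows that `A` and `D` are symmetric and that `B ⊆ C*`, `C ⊆ B*`. Adjoints of densely
defined operators are closed, so all four entries are closable with closures inside the
corresponding adjoints. Hence `𝒜 ⊆ [[Ā, B̄], [C̄, D̄]] ⊆ 𝒜^×`, while `𝒜^×` is a formal adjoint
of `𝒜` and therefore lies in `𝒜* = 𝒜`.
-/

theorem LinearPMap.IsClosed.closure_le_of_le {R E F : Type*} [CommRing R] [AddCommGroup E]
    [AddCommGroup F] [Module R E] [Module R F] [TopologicalSpace E] [TopologicalSpace F]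
    [ContinuousAdd E] [ContinuousAdd F] [TopologicalSpace R] [ContinuousSMul R E]
    [ContinuousSMul R F] {f g : E →ₗ.[R] F} (hg : g.IsClosed) (h : f ≤ g) : f.closure ≤ g := by
  apply le_of_le_graph
  rw [← (hg.isClosable.leIsClosable h).graph_closure_eq_closure_graph]
  exact Submodule.topologicalClosure_minimal _ (le_graph_of_le h) hg

namespace BlockOp

section

variable {H₁ H₂ K₁ K₂ : Type*}
  [NormedAddCommGroup H₁] [InnerProductSpace ℂ H₁]
  [NormedAddCommGroup H₂] [InnerProductSpace ℂ H₂]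
  [NormedAddCommGroup K₁] [InnerProductSpace ℂ K₁]
  [NormedAddCommGroup K₂] [InnerProductSpace ℂ K₂]
  {A A' : H₁ →ₗ.[ℂ] K₁} {B B' : H₂ →ₗ.[ℂ] K₁} {C C' : H₁ →ₗ.[ℂ] K₂} {D D' : H₂ →ₗ.[ℂ] K₂}

theorem mem_blockOpL_domain_iff {x : WithLp 2 (H₁ × H₂)} :
    x ∈ (blockOpL A B C D).domain ↔
      (x.fst ∈ A.domain ∧ x.fst ∈ C.domain) ∧ (x.snd ∈ B.domain ∧ x.snd ∈ D.domain) :=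
  Iff.rfl

theorem blockOpL_apply {x : WithLp 2 (H₁ × H₂)} (hxA : x.fst ∈ A.domain)
    (hxC : x.fst ∈ C.domain) (hxB : x.snd ∈ B.domain) (hxD : x.snd ∈ D.domain)
    (hx : x ∈ (blockOpL A B C D).domain) :
    blockOpL A B C D ⟨x, hx⟩ = WithLp.toLp 2
      (A ⟨x.fst, hxA⟩ + B ⟨x.snd, hxB⟩, C ⟨x.fst, hxC⟩ + D ⟨x.snd, hxD⟩) :=
  rfl

theorem blockOpL_mono (hA : A ≤ A') (hB : B ≤ B') (hC : C ≤ C') (hD : D ≤ D') :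
    blockOpL A B C D ≤ blockOpL A' B' C' D' := by
  refine ⟨fun x hx => ⟨⟨hA.1 hx.1.1, hC.1 hx.1.2⟩, hB.1 hx.2.1, hD.1 hx.2.2⟩, ?_⟩
  rintro ⟨x, hx⟩ ⟨y, hy⟩ (rfl : x = y)
  obtain ⟨⟨hxA, hxC⟩, hxB, hxD⟩ := mem_blockOpL_domain_iff.mp hx
  rw [blockOpL_apply hxA hxC hxB hxD, blockOpL_apply (hA.1 hxA) (hC.1 hxC) (hB.1 hxB) (hD.1 hxD),
    apply_comp_inclusion hA, apply_comp_inclusion hB, apply_comp_inclusion hC,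
    apply_comp_inclusion hD]
  rfl

theorem _root_.LinearPMap.IsFormalAdjoint.blockOpL
    {A' : K₁ →ₗ.[ℂ] H₁} {B' : K₁ →ₗ.[ℂ] H₂} {C' : K₂ →ₗ.[ℂ] H₁} {D' : K₂ →ₗ.[ℂ] H₂}
    (hA : A.IsFormalAdjoint A') (hB : B.IsFormalAdjoint B') (hC : C.IsFormalAdjoint C')
    (hD : D.IsFormalAdjoint D') :
    (blockOpL A B C D).IsFormalAdjoint (blockOpL A' C' B' D') := by
  rintro ⟨x, hx⟩ ⟨y, hy⟩
  obtain ⟨⟨hxA, hxC⟩, hxB, hxD⟩ := mem_blockOpL_domain_iff.mp hx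
  obtain ⟨⟨hyA', hyB'⟩, hyC', hyD'⟩ := mem_blockOpL_domain_iff.mp hy
  simp only [blockOpL_apply hxA hxC hxB hxD, blockOpL_apply hyA' hyB' hyC' hyD',
    WithLp.prod_inner_apply, WithLp.ofLp_fst, WithLp.ofLp_snd, inner_add_left,
    inner_add_right, hA ⟨_, hxA⟩ ⟨_, hyA'⟩,
    hB ⟨_, hxB⟩ ⟨_, hyB'⟩, hC ⟨_, hxC⟩ ⟨_, hyC'⟩, hD ⟨_, hxD⟩ ⟨_, hyD'⟩]
  ring

theorem toLp_inl_mem_blockOpL_domain {u : H₁} (huA : u ∈ A.domain) (huC : u ∈ C.domain) :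
    WithLp.toLp 2 (u, (0 : H₂)) ∈ (blockOpL A B C D).domain :=
  ⟨⟨huA, huC⟩, zero_mem _, zero_mem _⟩

theorem toLp_inr_mem_blockOpL_domain {v : H₂} (hvB : v ∈ B.domain) (hvD : v ∈ D.domain) :
    WithLp.toLp 2 ((0 : H₁), v) ∈ (blockOpL A B C D).domain :=
  ⟨⟨zero_mem _, zero_mem _⟩, hvB, hvD⟩

theorem blockOpL_toLp_inl {u : H₁} (huA : u ∈ A.domain) (huC : u ∈ C.domain) :
    blockOpL A B C D ⟨WithLp.toLp 2 (u, 0), toLp_inl_mem_blockOpL_domain huA huC⟩ =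
      WithLp.toLp 2 (A ⟨u, huA⟩, C ⟨u, huC⟩) := by
  change WithLp.toLp 2 (A ⟨u, huA⟩ + B 0, C ⟨u, huC⟩ + D 0) = _
  rw [LinearPMap.map_zero, LinearPMap.map_zero, add_zero, add_zero]

theorem blockOpL_toLp_inr {v : H₂} (hvB : v ∈ B.domain) (hvD : v ∈ D.domain) :
    blockOpL A B C D ⟨WithLp.toLp 2 (0, v), toLp_inr_mem_blockOpL_domain hvB hvD⟩ =
      WithLp.toLp 2 (B ⟨v, hvB⟩, D ⟨v, hvD⟩) := by
  change WithLp.toLp 2 (A 0 + B ⟨v, hvB⟩, C 0 + D ⟨v, hvD⟩) = _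
  rw [LinearPMap.map_zero, LinearPMap.map_zero, zero_add, zero_add]

theorem _root_.LinearPMap.IsFormalAdjoint.of_blockOpL
    {A' : K₁ →ₗ.[ℂ] H₁} {B' : K₁ →ₗ.[ℂ] H₂} {C' : K₂ →ₗ.[ℂ] H₁} {D' : K₂ →ₗ.[ℂ] H₂}
    (h : (blockOpL A B C D).IsFormalAdjoint (blockOpL A' C' B' D'))
    (hAC : A.domain = C.domain) (hBD : B.domain = D.domain)
    (hA'B' : A'.domain = B'.domain) (hC'D' : C'.domain = D'.domain) :
    A.IsFormalAdjoint A' ∧ B.IsFormalAdjoint B' ∧ C.IsFormalAdjoint C' ∧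
      D.IsFormalAdjoint D' := by
  refine ⟨fun u v => ?_, fun u v => ?_, fun u v => ?_, fun u v => ?_⟩
  · have hu := hAC.le u.2
    have hv := hA'B'.le v.2
    simpa [blockOpL_toLp_inl u.2 hu, blockOpL_toLp_inl v.2 hv, WithLp.prod_inner_apply] using
      h ⟨_, toLp_inl_mem_blockOpL_domain u.2 hu⟩ ⟨_, toLp_inl_mem_blockOpL_domain v.2 hv⟩
  · have hu := hBD.le u.2
    have hv := hA'B'.ge v.2
    simpa [blockOpL_toLp_inr u.2 hu, blockOpL_toLp_inl hv v.2, WithLp.prod_inner_apply] using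
      h ⟨_, toLp_inr_mem_blockOpL_domain u.2 hu⟩ ⟨_, toLp_inl_mem_blockOpL_domain hv v.2⟩
  · have hu := hAC.ge u.2
    have hv := hC'D'.le v.2
    simpa [blockOpL_toLp_inl hu u.2, blockOpL_toLp_inr v.2 hv, WithLp.prod_inner_apply] using
      h ⟨_, toLp_inl_mem_blockOpL_domain hu u.2⟩ ⟨_, toLp_inr_mem_blockOpL_domain v.2 hv⟩
  · have hu := hBD.ge u.2
    have hv := hC'D'.ge v.2
    simpa [blockOpL_toLp_inr hu u.2, blockOpL_toLp_inr hv v.2, WithLp.prod_inner_apply] using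
      h ⟨_, toLp_inr_mem_blockOpL_domain hu u.2⟩ ⟨_, toLp_inr_mem_blockOpL_domain hv v.2⟩

end

theorem statement8 {H₁ H₂ : Type*}
    [NormedAddCommGroup H₁] [InnerProductSpace ℂ H₁] [CompleteSpace H₁]
    [NormedAddCommGroup H₂] [InnerProductSpace ℂ H₂] [CompleteSpace H₂]
    (A : H₁ →ₗ.[ℂ] H₁) (B : H₂ →ₗ.[ℂ] H₁) (C : H₁ →ₗ.[ℂ] H₂) (D : H₂ →ₗ.[ℂ] H₂)
    (hAC : A.domain = C.domain) (hBD : B.domain = D.domain)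
    (h1 : Dense (A.domain : Set H₁)) (h2 : Dense (B.domain : Set H₂))
    (hsa : IsSelfAdjoint (blockOpL A B C D)) :
    A.IsClosable ∧ B.IsClosable ∧ C.IsClosable ∧ D.IsClosable ∧
    blockOpL A B C D = blockOpL A.closure B.closure C.closure D.closure ∧
    blockOpL A B C D = blockOpL A.adjoint C.adjoint B.adjoint D.adjoint := by
  have hC : Dense (C.domain : Set H₁) := hAC ▸ h1
  have hD : Dense (D.domain : Set H₂) := hBD ▸ h2
  have hdense := hsa.dense_domain
  have hadj : (blockOpL A B C D)† = blockOpL A B C D := hsa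
  have hsymm := adjoint_isFormalAdjoint hdense
  rw [hadj] at hsymm
  obtain ⟨hAA, hCB, hBC, hDD⟩ := hsymm.of_blockOpL hAC hBD hAC hBD
  have hA_le : A ≤ A† := hAA.le_adjoint h1
  have hB_le : B ≤ C† := hBC.le_adjoint hC
  have hC_le : C ≤ B† := hCB.le_adjoint h2
  have hD_le : D ≤ D† := hDD.le_adjoint hD
  have le_closures : blockOpL A B C D ≤ blockOpL A.closure B.closure C.closure D.closure :=
    blockOpL_mono A.le_closure B.le_closure C.le_closure D.le_closure
  have closures_le : blockOpL A.closure B.closure C.closure D.closure ≤ blockOpL A† C† B† D† :=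
    blockOpL_mono ((adjoint_isClosed h1).closure_le_of_le hA_le)
      ((adjoint_isClosed hC).closure_le_of_le hB_le)
      ((adjoint_isClosed h2).closure_le_of_le hC_le) ((adjoint_isClosed hD).closure_le_of_le hD_le)
  have formal_adjoint_le : blockOpL A† C† B† D† ≤ blockOpL A B C D :=
    hadj ▸ IsFormalAdjoint.le_adjoint hdense ((adjoint_isFormalAdjoint h1).symm.blockOpL
      (adjoint_isFormalAdjoint h2).symm (adjoint_isFormalAdjoint hC).symm
      (adjoint_isFormalAdjoint hD).symm)
  exact ⟨(adjoint_isClosed h1).isClosable.leIsClosable hA_le,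
    (adjoint_isClosed hC).isClosable.leIsClosable hB_le,
    (adjoint_isClosed h2).isClosable.leIsClosable hC_le,
    (adjoint_isClosed hD).isClosable.leIsClosable hD_le,
    le_closures.antisymm (closures_le.trans formal_adjoint_le),
    (le_closures.trans closures_le).antisymm formal_adjoint_le⟩

end BlockOp
end
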